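/- arXiv:2108.01816 — 7 statements merged into one kernel-verified Lean document; each statement's English description precedes it below -/
import Mathlib

section
/- Let (n, ⟨·,·⟩, φ) be of modified H-type and let {e_1, …, e_m} be a pseudo-orthonormal basis of v with ⟨e_i, e_i⟩ = ε_i = ±1, where m = dim v. Then for all z, z' in the center z: Σ_{i=1}^{m} ε_i·⟨j(z)e_i, j(z')e_i⟩ = m·B_φ(z, z'). (Equivalently, the Ricci curvature on z, Ric(z,z') = ¼ Σ_i ε_i ⟨j(z)e_i, j(z')e_i⟩, equals (m/4)·B_φ(z,z').) -/
/-!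
The defining identity of `j` makes every `j z` skew-adjoint on `v`, and polarizing
`j(z)² = -φ(z)` gives the Clifford relation `j(z) j(z') + j(z') j(z) = -2 B_φ(z, z')`.
For skew-adjoint `J, J'` and a symmetric form, `2 ⟨J e, J' e⟩ = -⟨e, (J J' + J' J) e⟩`, so each
basis vector contributes `ε_i · ε_i B_φ(z, z') = B_φ(z, z')` to the sum.
-/

open LinearMap (BilinForm IsSkewAdjoint)

theorem QuadraticMap.comp_add_comp_eq_neg_polar_smul_id {R M V : Type*} [CommRing R]
    [AddCommGroup M] [Module R M] [AddCommGroup V] [Module R V]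
    {j : M →ₗ[R] V →ₗ[R] V} {φ : QuadraticForm R M}
    (hj : ∀ z, j z ∘ₗ j z = (-(φ z)) • LinearMap.id) (z z' : M) :
    j z ∘ₗ j z' + j z' ∘ₗ j z = (-polar φ z z') • LinearMap.id := by
  have h := hj (z + z')
  rw [map_add, LinearMap.add_comp, LinearMap.comp_add, LinearMap.comp_add, hj z, hj z'] at h
  rw [polar]
  linear_combination (norm := module) h

namespace LinearMap.BilinForm.IsSymm

theorem isSkewAdjoint_restrict_of_lie_apply_eq {R n : Type*} [CommRing R] [LieRing n]
    [Module R n] {B : BilinForm R n} (hB : B.IsSymm) {V : Submodule R n} {J : V →ₗ[R] V}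
    {w : n} (hJ : ∀ x y : V, B ⁅(x : n), (y : n)⁆ w = B y (J x)) :
    IsSkewAdjoint (B.restrict V) J := by
  intro x y
  simp only [restrict_apply, domRestrict_apply, Pi.neg_apply, map_neg]
  rw [hB.eq, ← hJ, ← hJ, ← lie_skew, map_neg, LinearMap.neg_apply]

variable {R E : Type*} [CommRing R] [AddCommGroup E] [Module R E] {B : BilinForm R E}

theorem two_mul_apply_apply_eq_neg_comp_add_comp (hB : B.IsSymm) {J J' : E →ₗ[R] E}
    (hJ : IsSkewAdjoint B J) (hJ' : IsSkewAdjoint B J') (e : E) :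
    2 * B (J e) (J' e) = -B e ((J ∘ₗ J' + J' ∘ₗ J) e) := by
  have h₁ : B (J e) (J' e) = -B e (J (J' e)) := by
    rw [hJ, Pi.neg_apply, map_neg]
  have h₂ : B (J e) (J' e) = -B e (J' (J e)) := by
    rw [hB.eq, hJ', Pi.neg_apply, map_neg]
  rw [LinearMap.add_apply, LinearMap.comp_apply, LinearMap.comp_apply, map_add]
  linear_combination h₁ + h₂

theorem two_mul_sum_mul_apply_apply_eq_card_mul (hB : B.IsSymm) {J J' : E →ₗ[R] E}
    (hJ : IsSkewAdjoint B J) (hJ' : IsSkewAdjoint B J') {a : R}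
    (hJJ' : J ∘ₗ J' + J' ∘ₗ J = (-a) • LinearMap.id)
    {ι : Type*} [Fintype ι] (e : ι → E) (ε : ι → R) (he : ∀ i, B (e i) (e i) = ε i)
    (hε : ∀ i, ε i ^ 2 = 1) :
    2 * ∑ i, ε i * B (J (e i)) (J' (e i)) = Fintype.card ι * a := by
  have hterm (i : ι) : 2 * (ε i * B (J (e i)) (J' (e i))) = a := by
    rw [mul_left_comm, hB.two_mul_apply_apply_eq_neg_comp_add_comp hJ hJ', hJJ', LinearMap.smul_apply,
      LinearMap.id_apply, map_smul, he, smul_eq_mul]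
    linear_combination a * hε i
  rw [Finset.mul_sum, Finset.sum_congr rfl fun i _ => hterm i, Finset.sum_const,
    Finset.card_univ, nsmul_eq_mul]

end LinearMap.BilinForm.IsSymm

theorem modified_H_type_ricci_on_z_general
    {n : Type*} [LieRing n] [LieAlgebra ℝ n]
    (B : LinearMap.BilinForm ℝ n)
    (hBsymm : ∀ a b : n, B a b = B b a)
    (Z : Submodule ℝ n)
    (V : Submodule ℝ n)
    (j : Z →ₗ[ℝ] V →ₗ[ℝ] V)
    (hj : ∀ (z : Z) (x y : V), B ⁅(x : n), (y : n)⁆ (z : n) = B (y : n) ((j z x : V) : n))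
    (φ : QuadraticForm ℝ Z)
    (hH : ∀ z : Z, (j z) ∘ₗ (j z) = (-(φ z)) • (LinearMap.id : V →ₗ[ℝ] V))
    (m : ℕ)
    (eb : Module.Basis (Fin m) ℝ V) (ε : Fin m → ℝ)
    (hε : ∀ i, ε i = 1 ∨ ε i = -1)
    (horth : ∀ i l, B ((eb i : V) : n) ((eb l : V) : n) = if i = l then ε i else 0) :
    ∀ z z' : Z,
      ∑ i, ε i * B ((j z (eb i) : V) : n) ((j z' (eb i) : V) : n) =
        (m : ℝ) * ((φ (z + z') - φ z - φ z') / 2) := by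
  intro z z'
  have hB : B.IsSymm := ⟨hBsymm⟩
  have hBV : (B.restrict V).IsSymm := ⟨fun x y => hBsymm x y⟩
  have hskew (w : Z) : IsSkewAdjoint (B.restrict V) (j w) :=
    hB.isSkewAdjoint_restrict_of_lie_apply_eq (hj w)
  have hsq (i : Fin m) : ε i ^ 2 = 1 := by
    rcases hε i with h | h <;> norm_num [h]
  have key := hBV.two_mul_sum_mul_apply_apply_eq_card_mul (hskew z) (hskew z')
    (QuadraticMap.comp_add_comp_eq_neg_polar_smul_id hH z z') (fun i => eb i) ε
    (fun i => (horth i i).trans (if_pos rfl)) hsq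
  rw [Fintype.card_fin, QuadraticMap.polar] at key
  change 2 * ∑ i, ε i * B ((j z (eb i) : V) : n) ((j z' (eb i) : V) : n) = _ at key
  linarith

theorem modified_H_type_ricci_on_z
    {n : Type*} [LieRing n] [LieAlgebra ℝ n] [FiniteDimensional ℝ n]
    (B : LinearMap.BilinForm ℝ n)
    (hBsymm : ∀ a b : n, B a b = B b a)
    (hBnd : B.Nondegenerate)
    (Z : Submodule ℝ n)
    (hZ : Z = LieSubmodule.toSubmodule (LieAlgebra.center ℝ n))
    (h2step : ∀ a b : n, ⁅a, b⁆ ∈ Z)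
    (V : Submodule ℝ n)
    (hV : V = B.orthogonal Z)
    (hZnd : (B.restrict Z).Nondegenerate)
    (hVnd : (B.restrict V).Nondegenerate)
    (j : Z →ₗ[ℝ] V →ₗ[ℝ] V)
    (hj : ∀ (z : Z) (x y : V), B ⁅(x : n), (y : n)⁆ (z : n) = B (y : n) ((j z x : V) : n))
    (φ : QuadraticForm ℝ Z)
    (hH : ∀ z : Z, (j z) ∘ₗ (j z) = (-(φ z)) • (LinearMap.id : V →ₗ[ℝ] V))
    (m : ℕ) (hm : m = Module.finrank ℝ V)
    (eb : Module.Basis (Fin m) ℝ V) (ε : Fin m → ℝ)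
    (hε : ∀ i, ε i = 1 ∨ ε i = -1)
    (horth : ∀ i l, B ((eb i : V) : n) ((eb l : V) : n) = if i = l then ε i else 0) :
    ∀ z z' : Z,
      ∑ i, ε i * B ((j z (eb i) : V) : n) ((j z' (eb i) : V) : n) =
        (m : ℝ) * ((φ (z + z') - φ z - φ z') / 2) :=
  modified_H_type_ricci_on_z_general B hBsymm Z V j hj φ hH m eb ε hε horth
end

section
/- Let (n, ⟨·,·⟩, φ) be of modified H-type and let T : z → z be the unique linear map with ⟨T z, z'⟩ = B_φ(z, z') for all z, z' ∈ z. Then for every z ∈ z and every x ∈ v: [x, j(z)x] = ⟨x, x⟩·T z. -/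
/-!
Polarizing `j(z)² = -φ(z)` gives the anticommutation relation
`j(z) j(w) + j(w) j(z) = -2 B_φ(z, w)`. Since each `j(w)` is skew-adjoint,
`⟨[x, j(z)x], w⟩ = ⟨j(z)x, j(w)x⟩ = -½⟨x, (j(z) j(w) + j(w) j(z))x⟩ = ⟨x, x⟩ B_φ(z, w)
= ⟨⟨x, x⟩ T z, w⟩` for every `w ∈ z`, and nondegeneracy of `⟨·,·⟩` on `z` gives the identity.
-/

open LinearMap (BilinForm)
open QuadraticMap (polar)

section Clifford

variable {R M N : Type*} [CommRing R] [AddCommGroup M] [Module R M] [AddCommGroup N] [Module R N]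

theorem comp_add_comp_swap_eq_neg_polar_smul (Q : QuadraticMap R M R) (J : M →ₗ[R] N →ₗ[R] N)
    (hJ : ∀ m, J m ∘ₗ J m = -Q m • LinearMap.id) (a b : M) :
    J a ∘ₗ J b + J b ∘ₗ J a = -polar Q a b • LinearMap.id := by
  have hab := hJ (a + b)
  simp only [map_add, LinearMap.comp_add, LinearMap.add_comp, hJ a, hJ b] at hab
  unfold polar
  linear_combination (norm := module) hab

theorem two_mul_apply_apply_eq_polar_mul (β : BilinForm R N) (hβ : ∀ x y, β x y = β y x)
    (Q : QuadraticMap R M R) (J : M →ₗ[R] N →ₗ[R] N)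
    (hJ : ∀ m, J m ∘ₗ J m = -Q m • LinearMap.id)
    (hskew : ∀ m x y, β (J m x) y = -β x (J m y)) (a b : M) (x : N) :
    2 * β (J a x) (J b x) = polar Q a b * β x x := by
  have hanti := LinearMap.congr_fun (comp_add_comp_swap_eq_neg_polar_smul Q J hJ a b) x
  simp only [LinearMap.add_apply, LinearMap.comp_apply, LinearMap.smul_apply,
    LinearMap.id_apply] at hanti
  calc 2 * β (J a x) (J b x) = β (J a x) (J b x) + β (J b x) (J a x) := by rw [hβ (J b x)]; ring
    _ = -β x (J a (J b x) + J b (J a x)) := by rw [hskew, hskew, map_add]; ring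
    _ = polar Q a b * β x x := by rw [hanti, map_smul, smul_eq_mul]; ring

end Clifford

theorem bilinForm_apply_skew_of_lie_apply {R L : Type*} [CommRing R] [LieRing L]
    [LieAlgebra R L] (B : BilinForm R L) (hB : ∀ a b, B a b = B b a) (Z V : Submodule R L)
    (j : Z →ₗ[R] V →ₗ[R] V) (hj : ∀ (z : Z) (x y : V), B ⁅(x : L), (y : L)⁆ z = B y (j z x))
    (w : Z) (a b : V) : B (j w a) b = -B a (j w b) := by
  rw [hB, ← hj, ← lie_skew, map_neg, LinearMap.neg_apply, hj]

theorem modified_H_type_bracket_x_jzx_general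
    {n : Type*} [LieRing n] [LieAlgebra ℝ n]
    (B : LinearMap.BilinForm ℝ n)
    (hBsymm : ∀ a b : n, B a b = B b a)
    (Z : Submodule ℝ n)
    (h2step : ∀ a b : n, ⁅a, b⁆ ∈ Z)
    (V : Submodule ℝ n)
    (hZnd : (B.restrict Z).Nondegenerate)
    (j : Z →ₗ[ℝ] V →ₗ[ℝ] V)
    (hj : ∀ (z : Z) (x y : V), B ⁅(x : n), (y : n)⁆ (z : n) = B (y : n) ((j z x : V) : n))
    (φ : QuadraticForm ℝ Z)
    (hH : ∀ z : Z, (j z) ∘ₗ (j z) = (-(φ z)) • (LinearMap.id : V →ₗ[ℝ] V))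
    (T : Z →ₗ[ℝ] Z)
    (hT : ∀ a b : Z, B ((T a : Z) : n) ((b : Z) : n) = (φ (a + b) - φ a - φ b) / 2) :
    ∀ (z : Z) (x : V),
      ⁅(x : n), ((j z x : V) : n)⁆ = B (x : n) (x : n) • ((T z : Z) : n) := by
  intro z x
  have hpair : ∀ w : Z, B ⁅(x : n), (j z x : n)⁆ w = B x x * B (T z) w := by
    intro w
    have h := two_mul_apply_apply_eq_polar_mul (B.restrict V) (fun a b ↦ hBsymm a b) φ j hH
      (bilinForm_apply_skew_of_lie_apply B hBsymm Z V j hj) z w x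
    simp only [LinearMap.BilinForm.restrict_apply, LinearMap.domRestrict_apply] at h
    rw [hj, hT, ← polar]
    linear_combination h / 2
  have hinj := LinearMap.ker_eq_bot.mp (LinearMap.separatingLeft_iff_ker_eq_bot.mp hZnd.1)
  have hbracket : (⟨_, h2step x (j z x)⟩ : Z) = B x x • T z := hinj <| LinearMap.ext fun w ↦ by
    simpa [mul_comm] using hpair w
  exact congrArg Subtype.val hbracket

theorem modified_H_type_bracket_x_jzx
    {n : Type*} [LieRing n] [LieAlgebra ℝ n] [FiniteDimensional ℝ n]
    (B : LinearMap.BilinForm ℝ n)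
    (hBsymm : ∀ a b : n, B a b = B b a)
    (hBnd : B.Nondegenerate)
    (Z : Submodule ℝ n)
    (hZ : Z = LieSubmodule.toSubmodule (LieAlgebra.center ℝ n))
    (h2step : ∀ a b : n, ⁅a, b⁆ ∈ Z)
    (V : Submodule ℝ n)
    (hV : V = B.orthogonal Z)
    (hZnd : (B.restrict Z).Nondegenerate)
    (hVnd : (B.restrict V).Nondegenerate)
    (j : Z →ₗ[ℝ] V →ₗ[ℝ] V)
    (hj : ∀ (z : Z) (x y : V), B ⁅(x : n), (y : n)⁆ (z : n) = B (y : n) ((j z x : V) : n))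
    (φ : QuadraticForm ℝ Z)
    (hH : ∀ z : Z, (j z) ∘ₗ (j z) = (-(φ z)) • (LinearMap.id : V →ₗ[ℝ] V))
    (T : Z →ₗ[ℝ] Z)
    (hT : ∀ a b : Z, B ((T a : Z) : n) ((b : Z) : n) = (φ (a + b) - φ a - φ b) / 2) :
    ∀ (z : Z) (x : V),
      ⁅(x : n), ((j z x : V) : n)⁆ = B (x : n) (x : n) • ((T z : Z) : n) :=
  modified_H_type_bracket_x_jzx_general B hBsymm Z h2step V hZnd j hj φ hH T hT
end

section
/- Let (n, ⟨·,·⟩, φ) be of modified H-type and let T : z → z be the unique linear map with ⟨T z, z'⟩ = B_φ(z, z') for all z, z' ∈ z. Let z ∈ z and x ∈ v be nonzero with ⟨x, x⟩ ≠ 0. Then the linear span of {z, x, j(z)x} is a Lie subalgebra of n if and only if T z is a scalar multiple of z (i.e. z is an eigenvector of T or T z = 0). -/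
/-!
Since `z` is central, the only bracket of two generators that can leave `span {z, x, j(z)x}` is
`[x, j(z)x]`. Polarizing `j(z)² = -φ(z)` gives `j(z)j(w) + j(w)j(z) = -2 B_φ(z, w)`, hence
`⟨[x, j(z)x], w⟩ = ⟨j(z)x, j(w)x⟩ = ⟨x, x⟩ B_φ(z, w)` for every `w ∈ z`, i.e.
`[x, j(z)x] = ⟨x, x⟩ T z`. As `z ∩ v = 0` and `⟨x, x⟩ ≠ 0`, this lies in the span iff `T z ∈ ℝ z`.
-/

open Submodule

theorem forall_lie_mem_span_iff {R L : Type*} [CommRing R] [LieRing L] [LieAlgebra R L]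
    (s : Set L) :
    (∀ a ∈ span R s, ∀ b ∈ span R s, ⁅a, b⁆ ∈ span R s) ↔ ∀ a ∈ s, ∀ b ∈ s, ⁅a, b⁆ ∈ span R s := by
  let bracket : L →ₗ[R] L →ₗ[R] L := LieModule.toEnd R L L
  calc _ ↔ map₂ bracket (span R s) (span R s) ≤ span R s := map₂_le.symm
    _ ↔ _ := by rw [map₂_span_span, span_le, Set.image2_subset_iff]; rfl

theorem forall_lie_mem_span_triple_iff {R L : Type*} [CommRing R] [LieRing L] [LieAlgebra R L]
    {z x y : L} (hz : ∀ a : L, ⁅a, z⁆ = 0) :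
    (∀ a ∈ span R ({z, x, y} : Set L), ∀ b ∈ span R ({z, x, y} : Set L),
        ⁅a, b⁆ ∈ span R ({z, x, y} : Set L)) ↔ ⁅x, y⁆ ∈ span R ({z, x, y} : Set L) := by
  have hz' : ∀ a : L, ⁅z, a⁆ = 0 := fun a => by rw [← lie_skew, hz, neg_zero]
  rw [forall_lie_mem_span_iff]
  refine ⟨fun h => h x (by simp) y (by simp), fun hxy => ?_⟩
  have hyx : ⁅y, x⁆ ∈ span R ({z, x, y} : Set L) := by rw [← lie_skew]; exact neg_mem hxy
  simp only [Set.mem_insert_iff, Set.mem_singleton_iff, forall_eq_or_imp, forall_eq, hz, hz',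
    lie_self, zero_mem, hxy, hyx, and_self]

theorem disjoint_orthogonal_of_restrict_nondegenerate {R M : Type*} [CommRing R] [AddCommGroup M]
    [Module R M] {B : LinearMap.BilinForm R M} (hB : B.IsRefl) {W : Submodule R M}
    (hW : (B.restrict W).Nondegenerate) : Disjoint W (B.orthogonal W) := by
  rw [disjoint_iff, eq_bot_iff]
  exact (LinearMap.BilinForm.inf_orthogonal_self_le_ker_restrict hB).trans
    (by simp [hW.ker_eq_bot])

theorem mem_span_insert_iff_exists_smul_of_disjoint {R M : Type*} [Ring R] [AddCommGroup M]
    [Module R M] {Z V : Submodule R M} (hZV : Disjoint Z V) {u z : M} (hu : u ∈ Z) (hz : z ∈ Z)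
    {s : Set M} (hs : s ⊆ V) : u ∈ span R (insert z s) ↔ ∃ c : R, u = c • z := by
  rw [mem_span_insert]
  constructor
  · rintro ⟨c, w, hw, rfl⟩
    have hwZ : w ∈ Z := (Z.add_mem_iff_right (Z.smul_mem c hz)).mp hu
    have hwV : w ∈ V := span_le.mpr hs hw
    rw [disjoint_def.mp hZV w hwZ hwV, add_zero]
    exact ⟨c, rfl⟩
  · rintro ⟨c, rfl⟩
    exact ⟨c, 0, zero_mem _, (add_zero _).symm⟩

theorem comp_add_comp_eq_neg_polar_smul {R Z V : Type*} [CommRing R] [AddCommGroup Z] [Module R Z]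
    [AddCommGroup V] [Module R V] {j : Z →ₗ[R] V →ₗ[R] V} {φ : QuadraticForm R Z}
    (hH : ∀ z, j z ∘ₗ j z = -(φ z) • LinearMap.id) (z w : Z) :
    j z ∘ₗ j w + j w ∘ₗ j z = -(QuadraticMap.polar φ z w) • LinearMap.id := by
  have h := hH (z + w)
  rw [map_add, LinearMap.add_comp, LinearMap.comp_add, LinearMap.comp_add, hH z, hH w] at h
  rw [QuadraticMap.polar]
  linear_combination (norm := module) h

section CommRing

variable {R n : Type*} [CommRing R] [LieRing n] [LieAlgebra R n] {B : LinearMap.BilinForm R n}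
  {Z V : Submodule R n} {j : Z →ₗ[R] V →ₗ[R] V}

theorem apply_j_left_eq_neg_apply_j_right (hBsymm : ∀ a b : n, B a b = B b a)
    (hj : ∀ (z : Z) (x y : V), B ⁅(x : n), (y : n)⁆ (z : n) = B (y : n) ((j z x : V) : n))
    (w : Z) (a b : V) : B (j w a : n) (b : n) = -B (a : n) (j w b : n) := by
  rw [hBsymm, ← hj, ← hj, ← lie_skew, map_neg, LinearMap.neg_apply]

theorem two_mul_apply_j_apply_j {φ : QuadraticForm R Z} (hBsymm : ∀ a b : n, B a b = B b a)
    (hj : ∀ (z : Z) (x y : V), B ⁅(x : n), (y : n)⁆ (z : n) = B (y : n) ((j z x : V) : n))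
    (hH : ∀ z : Z, j z ∘ₗ j z = -(φ z) • LinearMap.id) (z w : Z) (x : V) :
    2 * B (j z x : n) (j w x : n) = QuadraticMap.polar φ z w * B (x : n) (x : n) := by
  have hz_skew := apply_j_left_eq_neg_apply_j_right hBsymm hj z x (j w x)
  have hw_skew : B (j z x : n) (j w x : n) = -B (x : n) (j w (j z x) : n) := by
    rw [hBsymm]; exact apply_j_left_eq_neg_apply_j_right hBsymm hj w x (j z x)
  have hanticomm := LinearMap.congr_fun (comp_add_comp_eq_neg_polar_smul hH z w) x
  rw [LinearMap.add_apply, LinearMap.comp_apply, LinearMap.comp_apply] at hanticomm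
  calc 2 * B (j z x : n) (j w x : n)
      = -B (x : n) ((j z (j w x) + j w (j z x) : V) : n) := by
        rw [coe_add, map_add]
        linear_combination hz_skew + hw_skew
    _ = QuadraticMap.polar φ z w * B (x : n) (x : n) := by
        rw [hanticomm]; simp

end CommRing

section Field

variable {K n : Type*} [Field K] [CharZero K] [LieRing n] [LieAlgebra K n]
  {B : LinearMap.BilinForm K n} {Z V : Submodule K n} {j : Z →ₗ[K] V →ₗ[K] V}

theorem lie_j_eq_smul_T {φ : QuadraticForm K Z} {T : Z →ₗ[K] Z}
    (hBsymm : ∀ a b : n, B a b = B b a) (h2step : ∀ a b : n, ⁅a, b⁆ ∈ Z)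
    (hZnd : (B.restrict Z).Nondegenerate)
    (hj : ∀ (z : Z) (x y : V), B ⁅(x : n), (y : n)⁆ (z : n) = B (y : n) ((j z x : V) : n))
    (hH : ∀ z : Z, j z ∘ₗ j z = -(φ z) • LinearMap.id)
    (hT : ∀ a b : Z, B ((T a : Z) : n) ((b : Z) : n) = (φ (a + b) - φ a - φ b) / 2)
    (z : Z) (x : V) : ⁅(x : n), (j z x : n)⁆ = B (x : n) (x : n) • (T z : n) := by
  suffices h : (⟨_, h2step _ _⟩ : Z) = B (x : n) (x : n) • T z from congrArg Subtype.val h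
  refine sub_eq_zero.mp (hZnd.1 _ fun w => ?_)
  have hpair := two_mul_apply_j_apply_j hBsymm hj hH z w x
  simp only [LinearMap.BilinForm.restrict_apply, LinearMap.domRestrict_apply, map_sub,
    map_smul, LinearMap.sub_apply, LinearMap.smul_apply, smul_eq_mul, hj, hT]
  rw [QuadraticMap.polar] at hpair
  linear_combination hpair / 2

end Field

theorem modified_H_type_totally_geodesic_subalgebra_general
    {n : Type*} [LieRing n] [LieAlgebra ℝ n]
    (B : LinearMap.BilinForm ℝ n)
    (hBsymm : ∀ a b : n, B a b = B b a)
    (Z : Submodule ℝ n)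
    (hZ : Z = LieSubmodule.toSubmodule (LieAlgebra.center ℝ n))
    (h2step : ∀ a b : n, ⁅a, b⁆ ∈ Z)
    (V : Submodule ℝ n)
    (hV : V = B.orthogonal Z)
    (hZnd : (B.restrict Z).Nondegenerate)
    (j : Z →ₗ[ℝ] V →ₗ[ℝ] V)
    (hj : ∀ (z : Z) (x y : V), B ⁅(x : n), (y : n)⁆ (z : n) = B (y : n) ((j z x : V) : n))
    (φ : QuadraticForm ℝ Z)
    (hH : ∀ z : Z, (j z) ∘ₗ (j z) = (-(φ z)) • (LinearMap.id : V →ₗ[ℝ] V))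
    (T : Z →ₗ[ℝ] Z)
    (hT : ∀ a b : Z, B ((T a : Z) : n) ((b : Z) : n) = (φ (a + b) - φ a - φ b) / 2)
    (z : Z) (x : V) (hxx : B (x : n) (x : n) ≠ 0) :
    (∀ a ∈ Submodule.span ℝ ({(z : n), (x : n), ((j z x : V) : n)} : Set n),
        ∀ b ∈ Submodule.span ℝ ({(z : n), (x : n), ((j z x : V) : n)} : Set n),
          ⁅a, b⁆ ∈ Submodule.span ℝ ({(z : n), (x : n), ((j z x : V) : n)} : Set n)) ↔
      (∃ c : ℝ, T z = c • z) := by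
  have hz_central : ∀ a : n, ⁅a, (z : n)⁆ = 0 := hZ ▸ z.2
  have hZV : Disjoint Z V :=
    hV ▸ disjoint_orthogonal_of_restrict_nondegenerate (fun a b h => (hBsymm a b).symm.trans h) hZnd
  have hxjx : ({(x : n), (j z x : n)} : Set n) ⊆ V := by
    simp [Set.insert_subset_iff]
  rw [forall_lie_mem_span_triple_iff hz_central, lie_j_eq_smul_T hBsymm h2step hZnd hj hH hT,
    smul_mem_iff _ hxx, mem_span_insert_iff_exists_smul_of_disjoint hZV (T z).2 z.2 hxjx]
  simp only [Subtype.ext_iff, coe_smul]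

theorem modified_H_type_totally_geodesic_subalgebra
    {n : Type*} [LieRing n] [LieAlgebra ℝ n] [FiniteDimensional ℝ n]
    (B : LinearMap.BilinForm ℝ n)
    (hBsymm : ∀ a b : n, B a b = B b a)
    (hBnd : B.Nondegenerate)
    (Z : Submodule ℝ n)
    (hZ : Z = LieSubmodule.toSubmodule (LieAlgebra.center ℝ n))
    (h2step : ∀ a b : n, ⁅a, b⁆ ∈ Z)
    (V : Submodule ℝ n)
    (hV : V = B.orthogonal Z)
    (hZnd : (B.restrict Z).Nondegenerate)
    (hVnd : (B.restrict V).Nondegenerate)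
    (j : Z →ₗ[ℝ] V →ₗ[ℝ] V)
    (hj : ∀ (z : Z) (x y : V), B ⁅(x : n), (y : n)⁆ (z : n) = B (y : n) ((j z x : V) : n))
    (φ : QuadraticForm ℝ Z)
    (hH : ∀ z : Z, (j z) ∘ₗ (j z) = (-(φ z)) • (LinearMap.id : V →ₗ[ℝ] V))
    (T : Z →ₗ[ℝ] Z)
    (hT : ∀ a b : Z, B ((T a : Z) : n) ((b : Z) : n) = (φ (a + b) - φ a - φ b) / 2)
    (z : Z) (x : V) (hz : z ≠ 0) (hx : x ≠ 0) (hxx : B (x : n) (x : n) ≠ 0) :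
    (∀ a ∈ Submodule.span ℝ ({(z : n), (x : n), ((j z x : V) : n)} : Set n),
        ∀ b ∈ Submodule.span ℝ ({(z : n), (x : n), ((j z x : V) : n)} : Set n),
          ⁅a, b⁆ ∈ Submodule.span ℝ ({(z : n), (x : n), ((j z x : V) : n)} : Set n)) ↔
      (∃ c : ℝ, T z = c • z) :=
  modified_H_type_totally_geodesic_subalgebra_general B hBsymm Z hZ h2step V hV hZnd j hj φ hH T hT
    z x hxx
end

section
/- Let (n, ⟨·,·⟩, φ) be of modified H-type, let T : z → z be the unique linear map with ⟨T z, z'⟩ = B_φ(z, z') for all z, z' ∈ z, let ξ = tr T and m = dim v. For c ∈ ℝ let D_c : n → n be the linear map determined by D_c(z') = (m/4)·T z' + c·z' for z' ∈ z and D_c(x) = (c − ξ/2)·x for x ∈ v. Then there exists c ∈ ℝ such that D_c is a derivation of the Lie algebra n if and only if there exists λ ∈ ℝ such that T([x, y]) = λ·[x, y] for all x, y ∈ v (i.e. the derived algebra [v, v] is contained in a single eigenspace of T); in that case c = (m/4)·λ + ξ works. -/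
/-!
Write `n = z ⊕ v` with `z` central and `[n, n] ⊆ z`. Splitting `a = z + x`, `b = z' + y`, all
brackets with central terms vanish, so a linear map that preserves `z` and acts on `v` as a scalar
`μ` satisfies the Leibniz rule as soon as `D [x, y] = 2μ [x, y]` for `x, y ∈ v`. For `D_c` this
reads `(m/4) T w = (c - ξ) w` for every bracket `w`, i.e. `[v, v]` lies in the eigenspace of `T`
for `4 (c - ξ) / m`; when `m = 0` we have `v = 0` and there is nothing to check.
-/

namespace LieAlgebra

variable {R L : Type*} [CommRing R] [LieRing L] [LieAlgebra R L]

theorem lie_eq_zero_of_mem_center_left {z : L} (hz : z ∈ center R L) (a : L) : ⁅z, a⁆ = 0 := by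
  rw [← lie_skew, (LieModule.mem_maxTrivSubmodule R L L z).mp hz a, neg_zero]

theorem lie_eq_zero_of_mem_center_right {z : L} (hz : z ∈ center R L) (a : L) : ⁅a, z⁆ = 0 :=
  (LieModule.mem_maxTrivSubmodule R L L z).mp hz a

variable {Z V : Submodule R L}

theorem leibniz_of_isCompl_of_le_center (hZ : Z ≤ (center R L : Submodule R L))
    (hZV : IsCompl Z V) (D : L →ₗ[R] L) (hDZ : ∀ z ∈ Z, D z ∈ center R L) (μ : R)
    (hDV : ∀ x ∈ V, D x = μ • x) (hDlie : ∀ x ∈ V, ∀ y ∈ V, D ⁅x, y⁆ = (2 * μ) • ⁅x, y⁆)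
    (a b : L) : D ⁅a, b⁆ = ⁅D a, b⁆ + ⁅a, D b⁆ := by
  have hsplit : ∀ a : L, ∃ z ∈ Z, ∃ x ∈ V, z + x = a := fun a =>
    Submodule.mem_sup.mp (hZV.sup_eq_top ▸ Submodule.mem_top)
  obtain ⟨z, hz, x, hx, rfl⟩ := hsplit a
  obtain ⟨z', hz', y, hy, rfl⟩ := hsplit b
  simp only [map_add, hDV x hx, hDV y hy, add_lie, lie_add, smul_lie, lie_smul,
    lie_eq_zero_of_mem_center_left (hZ hz), lie_eq_zero_of_mem_center_right (hZ hz'),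
    lie_eq_zero_of_mem_center_left (hDZ z hz),
    lie_eq_zero_of_mem_center_right (hDZ z' hz'), hDlie x hx y hy, map_zero]
  module

theorem exists_leibniz_iff_of_isCompl_of_le_center (hZ : Z ≤ (center R L : Submodule R L))
    (hZV : IsCompl Z V) (hLZ : ∀ a b : L, ⁅a, b⁆ ∈ Z) (A : Z →ₗ[R] Z) (μ : R) :
    (∃ D : L →ₗ[R] L, (∀ z : Z, D z = A z) ∧ (∀ x : V, D x = μ • x) ∧
      ∀ a b : L, D ⁅a, b⁆ = ⁅D a, b⁆ + ⁅a, D b⁆) ↔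
      ∀ x y : V, A ⟨⁅(x : L), (y : L)⁆, hLZ x y⟩ = (2 * μ) • ⟨⁅(x : L), (y : L)⁆, hLZ x y⟩ := by
  constructor
  · rintro ⟨D, hDZ, hDV, hD⟩ x y
    ext
    rw [← hDZ, hD, hDV, hDV, smul_lie, lie_smul, Submodule.coe_smul, two_mul, add_smul]
  · intro hA
    set D := LinearMap.ofIsCompl hZV (Z.subtype ∘ₗ A) (μ • V.subtype)
    have hDZ : ∀ z : Z, D z = A z := fun z => LinearMap.ofIsCompl_apply_left hZV z
    have hDV : ∀ x : V, D x = μ • x := fun x => LinearMap.ofIsCompl_apply_right hZV x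
    refine ⟨D, hDZ, hDV, leibniz_of_isCompl_of_le_center hZ hZV D
      (fun z hz => hDZ ⟨z, hz⟩ ▸ hZ (A _).2) μ (fun x hx => hDV ⟨x, hx⟩) fun x hx y hy => ?_⟩
    rw [hDZ ⟨⁅x, y⁆, hLZ x y⟩]
    exact congrArg Subtype.val (hA ⟨x, hx⟩ ⟨y, hy⟩)

end LieAlgebra

theorem modified_H_type_nilsoliton_iff_general
    {n : Type*} [LieRing n] [LieAlgebra ℝ n] [FiniteDimensional ℝ n]
    (B : LinearMap.BilinForm ℝ n)
    (hBsymm : ∀ a b : n, B a b = B b a)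
    (Z : Submodule ℝ n)
    (hZ : Z = LieSubmodule.toSubmodule (LieAlgebra.center ℝ n))
    (h2step : ∀ a b : n, ⁅a, b⁆ ∈ Z)
    (V : Submodule ℝ n)
    (hV : V = B.orthogonal Z)
    (hZnd : (B.restrict Z).Nondegenerate)
    (T : Z →ₗ[ℝ] Z)
    (ξ : ℝ)
    (m : ℕ) (hm : m = Module.finrank ℝ V) :
    ((∃ c : ℝ, ∃ D : n →ₗ[ℝ] n,
        (∀ z : Z, D (z : n) = ((m : ℝ) / 4) • ((T z : Z) : n) + c • (z : n)) ∧
        (∀ x : V, D (x : n) = (c - ξ / 2) • (x : n)) ∧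
        (∀ a b : n, D ⁅a, b⁆ = ⁅D a, b⁆ + ⁅a, D b⁆)) ↔
      (∃ lam : ℝ, ∀ x y : V,
        T ⟨⁅(x : n), (y : n)⁆, h2step x y⟩ = lam • ⟨⁅(x : n), (y : n)⁆, h2step x y⟩)) ∧
    (∀ lam : ℝ,
      (∀ x y : V,
        T ⟨⁅(x : n), (y : n)⁆, h2step x y⟩ = lam • ⟨⁅(x : n), (y : n)⁆, h2step x y⟩) →
      ∃ D : n →ₗ[ℝ] n,
        (∀ z : Z, D (z : n) =
          ((m : ℝ) / 4) • ((T z : Z) : n) + ((m : ℝ) / 4 * lam + ξ) • (z : n)) ∧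
        (∀ x : V, D (x : n) = ((m : ℝ) / 4 * lam + ξ - ξ / 2) • (x : n)) ∧
        (∀ a b : n, D ⁅a, b⁆ = ⁅D a, b⁆ + ⁅a, D b⁆)) := by
  have hZV : IsCompl Z V :=
    hV ▸ B.isCompl_orthogonal_of_restrict_nondegenerate (fun a b h => (hBsymm b a).trans h) hZnd
  have key := fun c : ℝ => LieAlgebra.exists_leibniz_iff_of_isCompl_of_le_center hZ.le hZV h2step
    (((m : ℝ) / 4) • T + c • LinearMap.id) (c - ξ / 2)
  simp only [LinearMap.add_apply, LinearMap.smul_apply, LinearMap.id_apply, Submodule.coe_add,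
    Submodule.coe_smul] at key
  simp only [key]
  have hlam : ∀ lam : ℝ, (∀ x y : V,
      T ⟨⁅(x : n), (y : n)⁆, h2step x y⟩ = lam • ⟨⁅(x : n), (y : n)⁆, h2step x y⟩) →
      ∀ x y : V, ((m : ℝ) / 4) • T ⟨⁅(x : n), (y : n)⁆, h2step x y⟩ +
        ((m : ℝ) / 4 * lam + ξ) • ⟨⁅(x : n), (y : n)⁆, h2step x y⟩ =
        (2 * ((m : ℝ) / 4 * lam + ξ - ξ / 2)) • ⟨⁅(x : n), (y : n)⁆, h2step x y⟩ :=
    fun lam hT x y => by rw [hT]; module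
  refine ⟨⟨fun ⟨c, hc⟩ => ?_, fun ⟨lam, hT⟩ => ⟨_, hlam lam hT⟩⟩, hlam⟩
  rcases eq_or_ne m 0 with hm0 | hm0
  · have hVbot : V = ⊥ := Submodule.finrank_eq_zero.mp (hm ▸ hm0)
    refine ⟨0, fun x y => ?_⟩
    have hw : (⟨⁅(x : n), (y : n)⁆, h2step x y⟩ : Z) = 0 := by
      ext
      simp [(Submodule.eq_bot_iff V).mp hVbot x x.2]
    rw [hw, map_zero, smul_zero]
  · refine ⟨((m : ℝ) / 4)⁻¹ * (c - ξ), fun x y => ?_⟩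
    rw [mul_smul, eq_inv_smul_iff₀ (by positivity)]
    linear_combination (norm := module) hc x y

theorem modified_H_type_nilsoliton_iff
    {n : Type*} [LieRing n] [LieAlgebra ℝ n] [FiniteDimensional ℝ n]
    (B : LinearMap.BilinForm ℝ n)
    (hBsymm : ∀ a b : n, B a b = B b a)
    (hBnd : B.Nondegenerate)
    (Z : Submodule ℝ n)
    (hZ : Z = LieSubmodule.toSubmodule (LieAlgebra.center ℝ n))
    (h2step : ∀ a b : n, ⁅a, b⁆ ∈ Z)
    (V : Submodule ℝ n)
    (hV : V = B.orthogonal Z)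
    (hZnd : (B.restrict Z).Nondegenerate)
    (hVnd : (B.restrict V).Nondegenerate)
    (j : Z →ₗ[ℝ] V →ₗ[ℝ] V)
    (hj : ∀ (z : Z) (x y : V), B ⁅(x : n), (y : n)⁆ (z : n) = B (y : n) ((j z x : V) : n))
    (φ : QuadraticForm ℝ Z)
    (hH : ∀ z : Z, (j z) ∘ₗ (j z) = (-(φ z)) • (LinearMap.id : V →ₗ[ℝ] V))
    (T : Z →ₗ[ℝ] Z)
    (hT : ∀ a b : Z, B ((T a : Z) : n) ((b : Z) : n) = (φ (a + b) - φ a - φ b) / 2)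
    (ξ : ℝ) (hξ : ξ = LinearMap.trace ℝ Z T)
    (m : ℕ) (hm : m = Module.finrank ℝ V) :
    ((∃ c : ℝ, ∃ D : n →ₗ[ℝ] n,
        (∀ z : Z, D (z : n) = ((m : ℝ) / 4) • ((T z : Z) : n) + c • (z : n)) ∧
        (∀ x : V, D (x : n) = (c - ξ / 2) • (x : n)) ∧
        (∀ a b : n, D ⁅a, b⁆ = ⁅D a, b⁆ + ⁅a, D b⁆)) ↔
      (∃ lam : ℝ, ∀ x y : V,
        T ⟨⁅(x : n), (y : n)⁆, h2step x y⟩ = lam • ⟨⁅(x : n), (y : n)⁆, h2step x y⟩)) ∧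
    (∀ lam : ℝ,
      (∀ x y : V,
        T ⟨⁅(x : n), (y : n)⁆, h2step x y⟩ = lam • ⟨⁅(x : n), (y : n)⁆, h2step x y⟩) →
      ∃ D : n →ₗ[ℝ] n,
        (∀ z : Z, D (z : n) =
          ((m : ℝ) / 4) • ((T z : Z) : n) + ((m : ℝ) / 4 * lam + ξ) • (z : n)) ∧
        (∀ x : V, D (x : n) = ((m : ℝ) / 4 * lam + ξ - ξ / 2) • (x : n)) ∧
        (∀ a b : n, D ⁅a, b⁆ = ⁅D a, b⁆ + ⁅a, D b⁆)) :=
  modified_H_type_nilsoliton_iff_general B hBsymm Z hZ h2step V hV hZnd T ξ m hm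
end

section
/- Let (n, ⟨·,·⟩, φ) be of modified H-type with φ(z) = ⟨z, z⟩ for all z ∈ z (the pseudo-H-type case, so the map T with ⟨T z, z'⟩ = B_φ(z,z') is the identity on z). Let p = dim z, m = dim v, and set c = p + m/4. Then the linear map D : n → n determined by D(z') = (m/4 + c)·z' for z' ∈ z and D(x) = (c − p/2)·x for x ∈ v is a derivation of the Lie algebra n. In particular, every pseudo-H-type metric Lie algebra admits a nilsoliton derivation D = Rc + c·Id. -/
theorem pseudo_H_type_nilsoliton
    {n : Type*} [LieRing n] [LieAlgebra ℝ n] [FiniteDimensional ℝ n]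
    (B : LinearMap.BilinForm ℝ n)
    (hBsymm : ∀ a b : n, B a b = B b a)
    (hBnd : B.Nondegenerate)
    (Z : Submodule ℝ n)
    (hZ : Z = LieSubmodule.toSubmodule (LieAlgebra.center ℝ n))
    (h2step : ∀ a b : n, ⁅a, b⁆ ∈ Z)
    (V : Submodule ℝ n)
    (hV : V = B.orthogonal Z)
    (hZnd : (B.restrict Z).Nondegenerate)
    (hVnd : (B.restrict V).Nondegenerate)
    (j : Z →ₗ[ℝ] V →ₗ[ℝ] V)
    (hj : ∀ (z : Z) (x y : V), B ⁅(x : n), (y : n)⁆ (z : n) = B (y : n) ((j z x : V) : n))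
    (φ : QuadraticForm ℝ Z)
    (hH : ∀ z : Z, (j z) ∘ₗ (j z) = (-(φ z)) • (LinearMap.id : V →ₗ[ℝ] V))
    (hpH : ∀ z : Z, φ z = B (z : n) (z : n))
    (p : ℕ) (hp : p = Module.finrank ℝ Z)
    (m : ℕ) (hm : m = Module.finrank ℝ V)
    (c : ℝ) (hc : c = (p : ℝ) + (m : ℝ) / 4)
    (D : n →ₗ[ℝ] n)
    (hDz : ∀ z : Z, D (z : n) = ((m : ℝ) / 4 + c) • (z : n))
    (hDv : ∀ x : V, D (x : n) = (c - (p : ℝ) / 2) • (x : n)) :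
    ∀ a b : n, D ⁅a, b⁆ = ⁅D a, b⁆ + ⁅a, D b⁆ := by
  have hrefl : B.IsRefl := fun a b h => by rw [hBsymm]; exact h
  have hcompl : IsCompl Z V := by
    rw [hV]; exact B.isCompl_orthogonal_of_restrict_nondegenerate hrefl hZnd
  have hsplit : ∀ a : n, ∃ z ∈ Z, ∃ v ∈ V, a = z + v := by
    intro a
    have : a ∈ Z ⊔ V := by rw [hcompl.sup_eq_top]; trivial
    obtain ⟨z, hz, v, hv, h⟩ := Submodule.mem_sup.mp this
    exact ⟨z, hz, v, hv, h.symm⟩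
  have hcent : ∀ z : n, z ∈ Z → ∀ b : n, ⁅z, b⁆ = 0 := by
    intro z hz b
    rw [hZ] at hz
    have := (LieModule.mem_maxTrivSubmodule ℝ n n z).mp hz b
    rw [← lie_skew, this, neg_zero]
  intro a b
  obtain ⟨za, hza, va, hva, ha⟩ := hsplit a
  obtain ⟨zb, hzb, vb, hvb, hb⟩ := hsplit b
  have hDab : D ⁅a, b⁆ = ((m : ℝ) / 4 + c) • ⁅a, b⁆ := hDz ⟨⁅a, b⁆, h2step a b⟩
  have hDa : D a = ((m : ℝ) / 4 + c) • za + (c - (p : ℝ) / 2) • va := by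
    rw [ha, map_add, hDz ⟨za, hza⟩, hDv ⟨va, hva⟩]
  have hDb : D b = ((m : ℝ) / 4 + c) • zb + (c - (p : ℝ) / 2) • vb := by
    rw [hb, map_add, hDz ⟨zb, hzb⟩, hDv ⟨vb, hvb⟩]
  have hzb' : ∀ x : n, ⁅x, zb⁆ = 0 := fun x => by
    rw [← lie_skew, hcent zb hzb x, neg_zero]
  have h1 : ⁅D a, b⁆ = (c - (p : ℝ) / 2) • ⁅a, b⁆ := by
    rw [hDa, ha]; simp [add_lie, smul_lie, hcent za hza]
  have h2 : ⁅a, D b⁆ = (c - (p : ℝ) / 2) • ⁅a, b⁆ := by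
    rw [hDb, hb]; simp [lie_add, lie_smul, hzb']
  rw [hDab, h1, h2, ← add_smul]
  congr 1
  rw [hc]; ring
end

section
/- Let n be a finite-dimensional real Lie algebra that is 2-step nilpotent with center z, equipped with a positive-definite inner product ⟨·,·⟩; set v = z^⊥ and assume v ≠ {0}, and let j(z) : v → v be defined by ⟨[x,y], z⟩ = ⟨y, j(z)x⟩ for x, y ∈ v. Suppose that for every nonzero a ∈ z there is a real number λ(a) < 0 with j(a)² = λ(a)·Id_v (Lauret's modified H-type condition). Then there exists a symmetric bilinear form Λ on z that is negative definite and satisfies j(a)² = Λ(a, a)·Id_v for all a ∈ z; in particular λ extends to a nondegenerate, negative-definite quadratic form on z. -/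
/-!
The square of `j a` is a scalar `λ(a)`, and the scalar is read off by the trace:
`λ(a) = tr (j a ∘ j a) / dim v`. The right-hand side is the diagonal of the bilinear form
`Λ(a, b) = tr (j a ∘ j b) / dim v`, which is symmetric because `tr (f g) = tr (g f)`,
and negative definite because `λ(a) < 0`.
-/

section NormalizedTraceForm

variable {K Z V : Type*} [Field K] [AddCommGroup Z] [Module K Z] [AddCommGroup V] [Module K V]

noncomputable def normalizedTraceForm (j : Z →ₗ[K] Module.End K V) : LinearMap.BilinForm K Z :=
  (Module.finrank K V : K)⁻¹ •
    ((LinearMap.mul K (Module.End K V)).compr₂ (LinearMap.trace K V)).compl₁₂ j j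

variable (j : Z →ₗ[K] Module.End K V)

theorem normalizedTraceForm_apply (a b : Z) :
    normalizedTraceForm j a b =
      (Module.finrank K V : K)⁻¹ * LinearMap.trace K V (j a ∘ₗ j b) :=
  rfl

theorem normalizedTraceForm_comm (a b : Z) :
    normalizedTraceForm j a b = normalizedTraceForm j b a := by
  simp only [normalizedTraceForm_apply, ← Module.End.mul_eq_comp, LinearMap.trace_mul_comm]

theorem normalizedTraceForm_self_of_comp_self_eq_smul_id [CharZero K] [FiniteDimensional K V]
    [Nontrivial V] {a : Z} {c : K} (h : j a ∘ₗ j a = c • LinearMap.id) :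
    normalizedTraceForm j a a = c := by
  have hdim : (Module.finrank K V : K) ≠ 0 := by exact_mod_cast Module.finrank_pos.ne'
  rw [normalizedTraceForm_apply, h, map_smul, LinearMap.trace_id, smul_eq_mul]
  field_simp

end NormalizedTraceForm

theorem lauret_modified_H_type_quadratic_general
    {n : Type*} [LieRing n] [LieAlgebra ℝ n] [FiniteDimensional ℝ n]
    (Z : Submodule ℝ n)
    (V : Submodule ℝ n)
    (hVne : V ≠ ⊥)
    (j : Z →ₗ[ℝ] V →ₗ[ℝ] V)
    (hL : ∀ a : Z, a ≠ 0 → ∃ lam : ℝ, lam < 0 ∧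
      (j a) ∘ₗ (j a) = lam • (LinearMap.id : V →ₗ[ℝ] V)) :
    ∃ Λ : LinearMap.BilinForm ℝ Z,
      (∀ a b : Z, Λ a b = Λ b a) ∧
      (∀ a : Z, a ≠ 0 → Λ a a < 0) ∧
      (∀ a : Z, (j a) ∘ₗ (j a) = (Λ a a) • (LinearMap.id : V →ₗ[ℝ] V)) := by
  have : Nontrivial V := Submodule.nontrivial_iff_ne_bot.mpr hVne
  refine ⟨normalizedTraceForm j, normalizedTraceForm_comm j, fun a ha => ?_, fun a => ?_⟩
  · obtain ⟨lam, hlam, hsq⟩ := hL a ha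
    rwa [normalizedTraceForm_self_of_comp_self_eq_smul_id j hsq]
  · by_cases ha : a = 0
    · simp [ha]
    · obtain ⟨lam, -, hsq⟩ := hL a ha
      rwa [normalizedTraceForm_self_of_comp_self_eq_smul_id j hsq]

/-- In the Riemannian case, Lauret's modified H-type condition
(for every nonzero a ∈ 𝔷 there is λ(a) < 0 with j(a)² = λ(a)·Id) implies that λ
comes from a negative-definite symmetric bilinear form Λ on 𝔷, i.e. λ extends to a
nondegenerate negative-definite quadratic form. -/
theorem lauret_modified_H_type_quadratic
    {n : Type*} [LieRing n] [LieAlgebra ℝ n] [FiniteDimensional ℝ n]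
    (B : LinearMap.BilinForm ℝ n)
    (hBsymm : ∀ a b : n, B a b = B b a)
    (hBpos : ∀ a : n, a ≠ 0 → 0 < B a a)
    (Z : Submodule ℝ n)
    (hZ : Z = LieSubmodule.toSubmodule (LieAlgebra.center ℝ n))
    (h2step : ∀ a b : n, ⁅a, b⁆ ∈ Z)
    (V : Submodule ℝ n)
    (hV : V = B.orthogonal Z)
    (hVne : V ≠ ⊥)
    (j : Z →ₗ[ℝ] V →ₗ[ℝ] V)
    (hj : ∀ (z : Z) (x y : V), B ⁅(x : n), (y : n)⁆ (z : n) = B (y : n) ((j z x : V) : n))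
    (hL : ∀ a : Z, a ≠ 0 → ∃ lam : ℝ, lam < 0 ∧
      (j a) ∘ₗ (j a) = lam • (LinearMap.id : V →ₗ[ℝ] V)) :
    ∃ Λ : LinearMap.BilinForm ℝ Z,
      (∀ a b : Z, Λ a b = Λ b a) ∧
      (∀ a : Z, a ≠ 0 → Λ a a < 0) ∧
      (∀ a : Z, (j a) ∘ₗ (j a) = (Λ a a) • (LinearMap.id : V →ₗ[ℝ] V)) :=
  lauret_modified_H_type_quadratic_general Z V hVne j hL
end

section
/- Let n be a finite-dimensional real 2-step nilpotent Lie algebra with a nondegenerate symmetric bilinear form ⟨·,·⟩ whose restrictions to the center z and to v = z^⊥ are nondegenerate, with j-maps j(z) : v → v defined by ⟨[x,y], z⟩ = ⟨y, j(z)x⟩. Let c ∈ ℝ, and suppose that for every z ∈ z with ⟨z, z⟩ = ±1 and every x ∈ v with ⟨x, x⟩ = ±1 one has ⟨j(z)x, j(z)x⟩ = 4c·⟨z, z⟩·⟨x, x⟩ (i.e. every nondegenerate semi-central plane has constant sectional curvature c). Then j(z)² = −4c·⟨z, z⟩·Id_v for all z ∈ z; that is, (n, ⟨·,·⟩, φ)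 is of modified H-type with quadratic form φ(z) = 4c·⟨z, z⟩. -/
/-! The defect ⟨j(z)x, j(z)x⟩ − 4c⟨z,z⟩⟨x,x⟩ is quadratic in `x` and in `z` separately, and
vanishes for unit `z`, `x`; by homogeneity it vanishes whenever `⟨z,z⟩ ≠ 0` and `⟨x,x⟩ ≠ 0`.
A quadratic form that vanishes on all anisotropic vectors of a nondegenerate symmetric space
vanishes identically: along a line `x + t y` with `⟨y,y⟩ ≠ 0` only finitely many points are
isotropic, and a quadratic polynomial with infinitely many roots is zero. Polarizing then gives
⟨j(z)x, j(z)y⟩ = 4c⟨z,z⟩⟨x,y⟩, which for the skew-adjoint `j(z)` on the nondegenerate space `v`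
says exactly that `j(z)² = −4c⟨z,z⟩ Id`. -/

open Polynomial

namespace LinearMap.BilinForm

section Field

variable {K M : Type*} [Field K] [AddCommGroup M] [Module K M]

noncomputable def polyAlongLine (γ : LinearMap.BilinForm K M) (x y : M) : K[X] :=
  C (γ x x) + C (γ x y + γ y x) * X + C (γ y y) * X ^ 2

theorem eval_polyAlongLine (γ : LinearMap.BilinForm K M) (x y : M) (t : K) :
    (γ.polyAlongLine x y).eval t = γ (x + t • y) (x + t • y) := by
  simp only [polyAlongLine, eval_add, eval_mul, eval_C, eval_X, eval_pow, map_add, map_smul,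
    LinearMap.add_apply, LinearMap.smul_apply, smul_eq_mul]
  ring

theorem polyAlongLine_ne_zero {γ : LinearMap.BilinForm K M} (x : M) {y : M} (hy : γ y y ≠ 0) :
    γ.polyAlongLine x y ≠ 0 := fun h ↦
  hy <| by simpa [polyAlongLine] using congr_arg (coeff · 2) h

theorem apply_self_eq_zero_of_anisotropic_of_ne_zero [Infinite K]
    {β γ : LinearMap.BilinForm K M} {y : M} (hy : β y y ≠ 0) (h : ∀ x, β x x ≠ 0 → γ x x = 0)
    (x : M) : γ x x = 0 := by
  have hβ_roots : {t | (β.polyAlongLine x y).IsRoot t}.Finite :=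
    finite_setOfPred_isRoot (polyAlongLine_ne_zero x hy)
  have hγ_line : γ.polyAlongLine x y = 0 := by
    refine eq_zero_of_infinite_isRoot _ (hβ_roots.infinite_compl.mono fun t ht ↦ ?_)
    simp only [Set.mem_compl_iff, Set.mem_ofPred_eq, IsRoot.def, eval_polyAlongLine] at ht ⊢
    exact h _ ht
  simpa [polyAlongLine] using congr_arg (coeff · 0) hγ_line

theorem apply_self_eq_zero_of_anisotropic [Infinite K] [Invertible (2 : K)]
    {β γ : LinearMap.BilinForm K M} (hβ : β.IsSymm) (hβnd : β.Nondegenerate)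
    (h : ∀ x, β x x ≠ 0 → γ x x = 0) (x : M) :
    γ x x = 0 := by
  cases subsingleton_or_nontrivial M
  · simp [Subsingleton.elim x 0]
  obtain ⟨y, hy⟩ := exists_bilinForm_self_ne_zero hβnd.ne_zero (isSymm_iff.1 hβ)
  exact apply_self_eq_zero_of_anisotropic_of_ne_zero hy h x

theorem eq_zero_of_isSymm_of_apply_self_eq_zero [Invertible (2 : K)] {γ : LinearMap.BilinForm K M}
    (hγ : γ.IsSymm) (h : ∀ x, γ x x = 0) : γ = 0 := by
  by_contra hne
  obtain ⟨x, hx⟩ := exists_bilinForm_self_ne_zero hne (isSymm_iff.1 hγ)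
  exact hx (h x)

end Field

section Real

variable {M : Type*} [AddCommGroup M] [Module ℝ M]

theorem apply_self_eq_zero_of_anisotropic_of_unit {β γ : LinearMap.BilinForm ℝ M}
    (h : ∀ x, (β x x = 1 ∨ β x x = -1) → γ x x = 0) {x : M} (hx : β x x ≠ 0) : γ x x = 0 := by
  set a : ℝ := (√|β x x|)⁻¹
  have ha : a * a = |β x x|⁻¹ := by rw [← mul_inv, Real.mul_self_sqrt (abs_nonneg _)]
  have hunit : β (a • x) (a • x) = 1 ∨ β (a • x) (a • x) = -1 := by
    simp only [map_smul, LinearMap.smul_apply, smul_eq_mul, ← mul_assoc, ha]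
    rcases hx.lt_or_gt with hneg | hpos
    · exact .inr (by rw [abs_of_neg hneg]; field_simp)
    · exact .inl (by rw [abs_of_pos hpos]; field_simp)
  have hγ := h _ hunit
  simp only [map_smul, LinearMap.smul_apply, smul_eq_mul, ← mul_assoc, ha] at hγ
  exact (mul_eq_zero.1 hγ).resolve_left (inv_ne_zero (abs_ne_zero.2 hx))

theorem apply_self_eq_zero_of_unit {β γ : LinearMap.BilinForm ℝ M} (hβ : β.IsSymm)
    (hβnd : β.Nondegenerate) (h : ∀ x, (β x x = 1 ∨ β x x = -1) → γ x x = 0) (x : M) :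
    γ x x = 0 :=
  apply_self_eq_zero_of_anisotropic hβ hβnd (fun _ ↦ apply_self_eq_zero_of_anisotropic_of_unit h) x

end Real

theorem comp_self_eq_neg_smul_id {R : Type*} [CommRing R] {N : Type*} [AddCommGroup N]
    [Module R N] {β : LinearMap.BilinForm R N} (hβnd : β.Nondegenerate) {f : N →ₗ[R] N}
    (hf : β.IsSkewAdjoint f) {a : R} (hfa : ∀ x y, β (f x) (f y) = a * β x y) :
    f ∘ₗ f = (-a) • LinearMap.id := by
  ext x
  refine sub_eq_zero.1 (hβnd.1 _ fun y ↦ ?_)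
  have := hf (f x) y
  simp only [Pi.neg_apply, map_neg] at this
  simp only [LinearMap.comp_apply, LinearMap.smul_apply, LinearMap.id_apply, map_sub, map_smul,
    LinearMap.sub_apply, smul_eq_mul]
  linear_combination this - hfa x y

end LinearMap.BilinForm

open LinearMap.BilinForm

section

variable {n : Type*} [AddCommGroup n] [Module ℝ n] {B : LinearMap.BilinForm ℝ n}
  {Z V : Submodule ℝ n} {j : Z →ₗ[ℝ] V →ₗ[ℝ] V} {c : ℝ}

variable (B j c) in
def HasConstantSemicentralCurvature : Prop :=
  ∀ (z : Z) (x : V),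
    (B (z : n) (z : n) = 1 ∨ B (z : n) (z : n) = -1) →
    (B (x : n) (x : n) = 1 ∨ B (x : n) (x : n) = -1) →
    B ((j z x : V) : n) ((j z x : V) : n) = 4 * c * B (z : n) (z : n) * B (x : n) (x : n)

theorem HasConstantSemicentralCurvature.apply_j_self_eq
    (hK : HasConstantSemicentralCurvature B j c) (hB : B.IsSymm)
    (hZnd : (B.restrict Z).Nondegenerate) (hVnd : (B.restrict V).Nondegenerate) (z : Z) (x : V) :
    B (j z x : n) (j z x : n) = 4 * c * B (z : n) (z : n) * B (x : n) (x : n) := by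
  have h_unit_z : ∀ z : Z, (B (z : n) (z : n) = 1 ∨ B (z : n) (z : n) = -1) → ∀ x : V,
      B (j z x : n) (j z x : n) = 4 * c * B (z : n) (z : n) * B (x : n) (x : n) := by
    intro z hz x
    exact sub_eq_zero.1 (apply_self_eq_zero_of_unit (hB.restrict V) hVnd
      (γ := (B.restrict V).compl₁₂ (j z) (j z) - (4 * c * B z z) • B.restrict V)
      (fun x hx ↦ sub_eq_zero.2 (hK z x hz hx)) x)
  have h_defect : B (j z x : n) (j z x : n) - 4 * c * B (x : n) (x : n) * B (z : n) (z : n) = 0 :=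
    apply_self_eq_zero_of_unit (hB.restrict Z) hZnd
      (γ := (B.restrict V).compl₁₂ (j.flip x) (j.flip x) - (4 * c * B x x) • B.restrict Z)
      (fun z hz ↦ show B (j z x : n) (j z x : n) - 4 * c * B (x : n) (x : n) * B (z : n) (z : n) = 0
        by linear_combination h_unit_z z hz x) z
  linear_combination h_defect

theorem HasConstantSemicentralCurvature.apply_j_apply_j_eq
    (hK : HasConstantSemicentralCurvature B j c) (hB : B.IsSymm)
    (hZnd : (B.restrict Z).Nondegenerate) (hVnd : (B.restrict V).Nondegenerate) (z : Z) (x y : V) :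
    B.restrict V (j z x) (j z y) = 4 * c * B (z : n) (z : n) * B.restrict V x y := by
  have h_defect := eq_zero_of_isSymm_of_apply_self_eq_zero
    (γ := (B.restrict V).compl₁₂ (j z) (j z) - (4 * c * B z z) • B.restrict V)
    ⟨fun x y ↦ ?_⟩ (fun x ↦ sub_eq_zero.2 (hK.apply_j_self_eq hB hZnd hVnd z x))
  · exact sub_eq_zero.1 (LinearMap.congr_fun₂ h_defect x y)
  · show B (j z x : n) (j z y : n) - 4 * c * B (z : n) (z : n) * B (x : n) (y : n) =
      B (j z y : n) (j z x : n) - 4 * c * B (z : n) (z : n) * B (y : n) (x : n)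
    rw [hB.eq (j z x : n), hB.eq (x : n)]

end

theorem isSkewAdjoint_j {n : Type*} [LieRing n] [Module ℝ n] {B : LinearMap.BilinForm ℝ n}
    (hB : B.IsSymm) {Z V : Submodule ℝ n} {j : Z →ₗ[ℝ] V →ₗ[ℝ] V}
    (hj : ∀ (z : Z) (x y : V), B ⁅(x : n), (y : n)⁆ (z : n) = B (y : n) ((j z x : V) : n))
    (z : Z) : (B.restrict V).IsSkewAdjoint (j z) := by
  intro x y
  rw [Pi.neg_apply, map_neg]
  show B (j z x : n) (y : n) = -B (x : n) (j z y : n)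
  rw [hB.eq (j z x : n), ← hj, ← hj, ← lie_skew (x : n) (y : n), map_neg, LinearMap.neg_apply]

theorem constant_semicentral_curvature_implies_modified_H_type_general
    {n : Type*} [LieRing n] [LieAlgebra ℝ n]
    (B : LinearMap.BilinForm ℝ n)
    (hBsymm : ∀ a b : n, B a b = B b a)
    (Z : Submodule ℝ n)
    (V : Submodule ℝ n)
    (hZnd : (B.restrict Z).Nondegenerate)
    (hVnd : (B.restrict V).Nondegenerate)
    (j : Z →ₗ[ℝ] V →ₗ[ℝ] V)
    (hj : ∀ (z : Z) (x y : V), B ⁅(x : n), (y : n)⁆ (z : n) = B (y : n) ((j z x : V) : n))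
    (c : ℝ)
    (hK : ∀ (z : Z) (x : V),
      (B (z : n) (z : n) = 1 ∨ B (z : n) (z : n) = -1) →
      (B (x : n) (x : n) = 1 ∨ B (x : n) (x : n) = -1) →
      B ((j z x : V) : n) ((j z x : V) : n) = 4 * c * B (z : n) (z : n) * B (x : n) (x : n)) :
    ∀ z : Z, (j z) ∘ₗ (j z) = (-(4 * c * B (z : n) (z : n))) • (LinearMap.id : V →ₗ[ℝ] V) := by
  intro z
  have hB : B.IsSymm := ⟨hBsymm⟩
  exact comp_self_eq_neg_smul_id hVnd (isSkewAdjoint_j hB hj z)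
    (HasConstantSemicentralCurvature.apply_j_apply_j_eq hK hB hZnd hVnd z)

/-- If every nondegenerate semi-central plane has constant
sectional curvature c, i.e. ⟨j(z)x, j(z)x⟩ = 4c·⟨z,z⟩·⟨x,x⟩ for all unit
z ∈ 𝔷 and unit x ∈ 𝔳, then j(z)² = −4c·⟨z,z⟩·Id for all z ∈ 𝔷, i.e. the group
is of modified H-type with φ(z) = 4c·⟨z,z⟩. -/
theorem constant_semicentral_curvature_implies_modified_H_type
    {n : Type*} [LieRing n] [LieAlgebra ℝ n] [FiniteDimensional ℝ n]
    (B : LinearMap.BilinForm ℝ n)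
    (hBsymm : ∀ a b : n, B a b = B b a)
    (hBnd : B.Nondegenerate)
    (Z : Submodule ℝ n)
    (hZ : Z = LieSubmodule.toSubmodule (LieAlgebra.center ℝ n))
    (h2step : ∀ a b : n, ⁅a, b⁆ ∈ Z)
    (V : Submodule ℝ n)
    (hV : V = B.orthogonal Z)
    (hZnd : (B.restrict Z).Nondegenerate)
    (hVnd : (B.restrict V).Nondegenerate)
    (j : Z →ₗ[ℝ] V →ₗ[ℝ] V)
    (hj : ∀ (z : Z) (x y : V), B ⁅(x : n), (y : n)⁆ (z : n) = B (y : n) ((j z x : V) : n))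
    (c : ℝ)
    (hK : ∀ (z : Z) (x : V),
      (B (z : n) (z : n) = 1 ∨ B (z : n) (z : n) = -1) →
      (B (x : n) (x : n) = 1 ∨ B (x : n) (x : n) = -1) →
      B ((j z x : V) : n) ((j z x : V) : n) = 4 * c * B (z : n) (z : n) * B (x : n) (x : n)) :
    ∀ z : Z, (j z) ∘ₗ (j z) = (-(4 * c * B (z : n) (z : n))) • (LinearMap.id : V →ₗ[ℝ] V) :=
  constant_semicentral_curvature_implies_modified_H_type_general B hBsymm Z V hZnd hVnd j hj c hK
end
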